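/- arXiv:1405.2238 — 3 statements merged into one kernel-verified Lean document; each statement's English description precedes it below -/
import Mathlib

section
/- A σ-maxitive measure τ on a σ-algebra 𝓑 satisfies the Radon–Nikodym property with respect to the Shilkret integral (i.e. every σ-maxitive ν on 𝓑 with ν ≪ τ in the sense ν(B) ≤ ∞·τ(B) for all B admits a 𝓑-measurable c : E → [0,∞] with ν(B) = sup_{t≥0} t·τ(B ∩ {c > t}) for all B ∈ 𝓑) if and only if τ is σ-finite and σ-principal. -/
open scoped ENNReal
open Set Filter MeasureTheory

variable {E : Type*}

/-- `f : E → [0,∞]` is `𝓑`-measurable: `{f > t}` is measurable for every `t`. -/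
def Premeasurable [MeasurableSpace E] (f : E → ℝ≥0∞) : Prop :=
  ∀ t : ℝ≥0∞, MeasurableSet {x | t < f x}

/-- A maxitive measure on the σ-algebra of measurable subsets of `E`. -/
def Maxitive [MeasurableSpace E] (ν : Set E → ℝ≥0∞) : Prop :=
  ν ∅ = 0 ∧ ∀ A B : Set E, MeasurableSet A → MeasurableSet B →
    ν (A ∪ B) = max (ν A) (ν B)

/-- A σ-maxitive measure: a maxitive measure commuting with countable nondecreasing unions. -/
def SigmaMaxitive [MeasurableSpace E] (ν : Set E → ℝ≥0∞) : Prop :=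
  Maxitive ν ∧ ∀ B : ℕ → Set E, (∀ n, MeasurableSet (B n)) → Monotone B →
    ν (⋃ n, B n) = ⨆ n, ν (B n)

/-- `N` is `τ`-negligible: it is contained in a measurable set of `τ`-measure zero. -/
def Negligible [MeasurableSpace E] (τ : Set E → ℝ≥0∞) (N : Set E) : Prop :=
  ∃ B : Set E, MeasurableSet B ∧ N ⊆ B ∧ τ B = 0

/-- The `τ`-essential supremum of `f` over `B`: `inf { t > 0 : B ∩ {f > t} is τ-negligible }`. -/
noncomputable def essSupOn [MeasurableSpace E] (τ : Set E → ℝ≥0∞) (f : E → ℝ≥0∞)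
    (B : Set E) : ℝ≥0∞ :=
  sInf {t : ℝ≥0∞ | 0 < t ∧ Negligible τ (B ∩ {x | t < f x})}

/-- `ν ≪ τ`: absolute continuity. -/
def AbsCont [MeasurableSpace E] (ν τ : Set E → ℝ≥0∞) : Prop :=
  ∀ B : Set E, MeasurableSet B → τ B = 0 → ν B = 0

/-- `ν ⋘ τ`: strong absolute continuity, i.e. `ν` has a measurable relative density
with respect to `τ`. -/
def StrongAbsCont [MeasurableSpace E] (ν τ : Set E → ℝ≥0∞) : Prop :=
  ∃ f : E → ℝ≥0∞, Premeasurable f ∧ ∀ B : Set E, MeasurableSet B → ν B = essSupOn τ f B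

/-- `c` is a cardinal density of `ν`: `ν B = sup_{x ∈ B} c x` for every measurable `B`. -/
def IsCardinalDensity [MeasurableSpace E] (ν : Set E → ℝ≥0∞) (c : E → ℝ≥0∞) : Prop :=
  ∀ B : Set E, MeasurableSet B → ν B = ⨆ x ∈ B, c x

/-- `τ` is essential: there exists a σ-finite σ-additive measure `m` with the same
null measurable sets. -/
def Essential [MeasurableSpace E] (τ : Set E → ℝ≥0∞) : Prop :=
  ∃ m : Measure E, SigmaFinite m ∧ ∀ B : Set E, MeasurableSet B → (0 < τ B ↔ 0 < m B)

/-- A σ-ideal of the σ-algebra of measurable sets. -/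
def SigmaIdeal [MeasurableSpace E] (I : Set (Set E)) : Prop :=
  I.Nonempty ∧ (∀ S ∈ I, MeasurableSet S) ∧
  (∀ f : ℕ → Set E, (∀ n, f n ∈ I) → (⋃ n, f n) ∈ I) ∧
  (∀ B S : Set E, MeasurableSet B → S ∈ I → B ⊆ S → B ∈ I)

/-- `τ` is σ-principal: every σ-ideal has a greatest element modulo `τ`-negligible sets. -/
def SigmaPrincipal [MeasurableSpace E] (τ : Set E → ℝ≥0∞) : Prop :=
  ∀ I : Set (Set E), SigmaIdeal I → ∃ L ∈ I, ∀ S ∈ I, Negligible τ (S \ L)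

/-- A pseudo-multiplication on `[0,∞]`. -/
structure PseudoMul where
  op : ℝ≥0∞ → ℝ≥0∞ → ℝ≥0∞
  assoc : ∀ a b c, op (op a b) c = op a (op b c)
  contOn : ContinuousOn (fun q : ℝ≥0∞ × ℝ≥0∞ => op q.1 q.2) (Set.Ioo 0 ⊤ ×ˢ Set.univ)
  contLeft : ∀ t, ContinuousOn (fun s => op s t) (Set.Ioi 0)
  monoLeft : ∀ t, Monotone fun s => op s t
  monoRight : ∀ s, Monotone (op s)
  one : ℝ≥0∞
  one_op : ∀ t, op one t = t
  eq_zero : ∀ s t, op s t = 0 → s = 0 ∨ t = 0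
  zero_op : ∀ t, op 0 t = 0
  op_zero : ∀ t, op t 0 = 0

/-- `t` is `⊙`-finite: `inf_{s > 0} s ⊙ t = 0`. -/
def OdotFinite (p : PseudoMul) (t : ℝ≥0∞) : Prop :=
  (⨅ s ∈ Set.Ioi (0 : ℝ≥0∞), p.op s t) = 0

/-- The idempotent `⊙`-integral `∫_B f ⊙ dτ = sup_{t ∈ [0,∞)} t ⊙ τ (B ∩ {f > t})`. -/
noncomputable def iInt [MeasurableSpace E] (p : PseudoMul) (τ : Set E → ℝ≥0∞)
    (f : E → ℝ≥0∞) (B : Set E) : ℝ≥0∞ :=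
  ⨆ t ∈ Set.Iio (⊤ : ℝ≥0∞), p.op t (τ (B ∩ {x | t < f x}))

/-- `ν ≪_⊙ τ`: `ν B ≤ ∞ ⊙ τ B` for every measurable `B`. -/
def OdotAbsCont [MeasurableSpace E] (p : PseudoMul) (ν τ : Set E → ℝ≥0∞) : Prop :=
  ∀ B : Set E, MeasurableSet B → ν B ≤ p.op ⊤ (τ B)

/-- `ν` is semi-`⊙`-finite. -/
def SemiOdotFinite [MeasurableSpace E] (p : PseudoMul) (ν : Set E → ℝ≥0∞) : Prop :=
  ∀ B : Set E, MeasurableSet B →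
    ν B = ⨆ A ∈ {A : Set E | MeasurableSet A ∧ A ⊆ B ∧ OdotFinite p (ν A)}, ν A

/-- `τ` is σ-`⊙`-finite. -/
def SigmaOdotFinite [MeasurableSpace E] (p : PseudoMul) (τ : Set E → ℝ≥0∞) : Prop :=
  ∃ B : ℕ → Set E, (∀ n, MeasurableSet (B n)) ∧ (⋃ n, B n) = Set.univ ∧
    ∀ n, OdotFinite p (τ (B n))

/-- Continuity from below. -/
def ContFromBelow [MeasurableSpace E] (ν : Set E → ℝ≥0∞) : Prop :=
  ∀ B : ℕ → Set E, (∀ n, MeasurableSet (B n)) → Monotone B →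
    Tendsto (fun n => ν (B n)) atTop (nhds (ν (⋃ n, B n)))

/-- Continuity from above (no finiteness assumption). -/
def ContFromAbove [MeasurableSpace E] (ν : Set E → ℝ≥0∞) : Prop :=
  ∀ B : ℕ → Set E, (∀ n, MeasurableSet (B n)) → Antitone B →
    Tendsto (fun n => ν (B n)) atTop (nhds (ν (⋂ n, B n)))

/-- An optimal measure: a maxitive measure continuous from below and from above. -/
def Optimal [MeasurableSpace E] (ν : Set E → ℝ≥0∞) : Prop :=
  Maxitive ν ∧ ContFromBelow ν ∧ ContFromAbove ν

/-!
Necessity. Given a σ-ideal `I`, the `{0, 1}`-valued set function that vanishes exactly on the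
sets that are `τ`-negligible modulo a member of `I` is σ-maxitive and dominated by `∞ · τ`. Its
Shilkret density `c` forces `τ (S ∩ {c > 0}) = 0` for every `S ∈ I`, while `{c = 0}` is negligible
modulo a single `L ∈ I`; this `L` is essentially greatest. The same construction with the
`τ`-negligible sets in place of `I` gives `τ {c = 0} = 0` and `τ {c > t} ≤ 1 / t`, whence
σ-finiteness.

Sufficiency. For each `q` in a countable dense subset of `[0, ∞]`, σ-principality gives an
essentially greatest set `L_q` among those on which `ν ≤ q · τ` holds hereditarily, and the density
is `c x = inf {q | x ∈ L_q}`. A second exhaustion, of the sets on which `q · τ ≤ ν`, shows that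
`q · τ ≤ ν` off `L_q`, hence `∫_B c dτ ≤ ν B`. Conversely, slicing `B` into the shells
`δ ^ k ≤ c < δ ^ (k + 1)` gives `ν B ≤ δ · ∫_B c dτ` for every `δ > 1`; σ-finiteness enters only
to show that `ν {c = 0} = 0`.
-/

/-- The Shilkret integral `∫_B c dτ`. -/
noncomputable def shilkret [MeasurableSpace E] (τ : Set E → ℝ≥0∞) (c : E → ℝ≥0∞) (B : Set E) :
    ℝ≥0∞ :=
  ⨆ t ∈ Set.Iio (⊤ : ℝ≥0∞), t * τ (B ∩ {x | t < c x})

def HasShilkretRNProperty [MeasurableSpace E] (τ : Set E → ℝ≥0∞) : Prop :=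
  ∀ ν : Set E → ℝ≥0∞, SigmaMaxitive ν → (∀ B : Set E, MeasurableSet B → ν B ≤ ⊤ * τ B) →
    ∃ c : E → ℝ≥0∞, Premeasurable c ∧ ∀ B : Set E, MeasurableSet B → ν B = shilkret τ c B

def IsSigmaFinite [MeasurableSpace E] (τ : Set E → ℝ≥0∞) : Prop :=
  ∃ B : ℕ → Set E, (∀ n, MeasurableSet (B n)) ∧ (⋃ n, B n) = Set.univ ∧ ∀ n, τ (B n) < ⊤

def saturation [MeasurableSpace E] (τ : Set E → ℝ≥0∞) (F : Set (Set E)) : Set (Set E) :=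
  {N | ∃ S ∈ F, Negligible τ (N \ S)}

def dominatedSets [MeasurableSpace E] (ν τ : Set E → ℝ≥0∞) (q : ℝ≥0∞) : Set (Set E) :=
  {A | MeasurableSet A ∧ ∀ A' ⊆ A, MeasurableSet A' → ν A' ≤ q * τ A'}

open Classical in
noncomputable def levelDensity (q : ℕ → ℝ≥0∞) (L : ℕ → Set E) (x : E) : ℝ≥0∞ :=
  ⨅ n, if x ∈ L n then q n else ⊤

lemma union_mem_of_iUnion_mem {F : Set (Set E)}
    (hF : ∀ f : ℕ → Set E, (∀ n, f n ∈ F) → ⋃ n, f n ∈ F) {A B : Set E} (hA : A ∈ F)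
    (hB : B ∈ F) : A ∪ B ∈ F := by
  have hAB := hF (fun n => if n = 0 then A else B) fun n => by split_ifs <;> assumption
  convert hAB using 1
  ext x
  simp only [mem_union, mem_iUnion]
  constructor
  · rintro (hx | hx)
    · exact ⟨0, by simpa using hx⟩
    · exact ⟨1, by simpa using hx⟩
  · rintro ⟨n, hx⟩
    split_ifs at hx <;> simp [hx]

lemma setOf_pos_eq_iUnion_inv_lt (f : E → ℝ≥0∞) :
    {x | 0 < f x} = ⋃ n : ℕ, {x | ((n : ℝ≥0∞) + 1)⁻¹ < f x} := by
  ext x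
  simp only [mem_iUnion]
  refine ⟨fun (hx : 0 < f x) => ?_, fun ⟨n, hn⟩ => show 0 < f x from zero_le.trans_lt hn⟩
  obtain ⟨n, hn⟩ := ENNReal.exists_inv_nat_lt hx.ne'
  exact ⟨n, lt_of_le_of_lt (ENNReal.inv_le_inv.2 le_self_add) hn⟩

lemma Measurable.premeasurable [MeasurableSpace E] {c : E → ℝ≥0∞} (hc : Measurable c) :
    Premeasurable c :=
  fun _ => measurableSet_lt measurable_const hc

section Maxitive

variable [MeasurableSpace E] {ν τ : Set E → ℝ≥0∞} {A B : Set E}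

lemma Maxitive.mono (hν : Maxitive ν) (hA : MeasurableSet A) (hB : MeasurableSet B)
    (h : A ⊆ B) : ν A ≤ ν B := by
  rw [← union_eq_self_of_subset_left h, hν.2 A B hA hB]
  exact le_max_left _ _

lemma Maxitive.le_of_measure_diff_eq_zero (hτ : Maxitive τ) (hA : MeasurableSet A)
    (hB : MeasurableSet B) (h : τ (A \ B) = 0) : τ A ≤ τ B := by
  calc τ A ≤ τ (B ∪ A \ B) := hτ.mono hA (hB.union (hA.diff hB)) fun x hx => by
        by_cases hxB : x ∈ B
        exacts [Or.inl hxB, Or.inr ⟨hx, hxB⟩]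
    _ = τ B := by rw [hτ.2 _ _ hB (hA.diff hB), h, max_eq_left zero_le]

lemma SigmaMaxitive.measure_iUnion_nat_le (hν : SigmaMaxitive ν) {f : ℕ → Set E}
    (hf : ∀ n, MeasurableSet (f n)) {b : ℝ≥0∞} (h : ∀ n, ν (f n) ≤ b) :
    ν (⋃ n, f n) ≤ b := by
  have hacc_meas : ∀ n, MeasurableSet (accumulate f n) := fun n =>
    MeasurableSet.iUnion fun i => MeasurableSet.iUnion fun _ => hf i
  have hacc : ∀ n, ν (accumulate f n) ≤ b := by
    intro n
    induction n with
    | zero => simpa [accumulate_zero_nat] using h 0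
    | succ n ih =>
      rw [accumulate_succ, hν.1.2 _ _ (hacc_meas n) (hf _)]
      exact max_le ih (h _)
  rw [← iUnion_accumulate, hν.2 _ hacc_meas monotone_accumulate]
  exact iSup_le hacc

lemma SigmaMaxitive.measure_iUnion_le {ι : Type*} [Countable ι] (hν : SigmaMaxitive ν)
    {f : ι → Set E} (hf : ∀ i, MeasurableSet (f i)) {b : ℝ≥0∞} (h : ∀ i, ν (f i) ≤ b) :
    ν (⋃ i, f i) ≤ b := by
  cases isEmpty_or_nonempty ι
  · rw [iUnion_of_empty, hν.1.1]
    exact zero_le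
  · obtain ⟨g, hg⟩ := exists_surjective_nat ι
    rw [← hg.iUnion_comp]
    exact hν.measure_iUnion_nat_le (fun n => hf (g n)) fun n => h (g n)

lemma SigmaMaxitive.const_mul (hτ : SigmaMaxitive τ) (q : ℝ≥0∞) :
    SigmaMaxitive fun B => q * τ B := by
  refine ⟨⟨by simp [hτ.1.1], fun A B hA hB => ?_⟩, fun B hB hmono => ?_⟩
  · simp only [hτ.1.2 A B hA hB, mul_max]
  · simp only [hτ.2 B hB hmono, ENNReal.mul_iSup]

end Maxitive

section Negligible

variable [MeasurableSpace E] {τ : Set E → ℝ≥0∞} {N N' : Set E}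

lemma Negligible.mono (hN' : Negligible τ N') (h : N ⊆ N') : Negligible τ N :=
  let ⟨B, hB, hN'B, hτB⟩ := hN'
  ⟨B, hB, h.trans hN'B, hτB⟩

lemma negligible_of_measure_eq_zero (hN : MeasurableSet N) (h : τ N = 0) : Negligible τ N :=
  ⟨N, hN, subset_rfl, h⟩

lemma Negligible.measure_eq_zero (hτ : Maxitive τ) (hN : MeasurableSet N)
    (h : Negligible τ N) : τ N = 0 :=
  let ⟨_, hB, hNB, hτB⟩ := h
  le_antisymm (hτB ▸ hτ.mono hN hB hNB) zero_le

lemma negligible_iUnion (hτ : SigmaMaxitive τ) {f : ℕ → Set E} (h : ∀ n, Negligible τ (f n)) :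
    Negligible τ (⋃ n, f n) := by
  choose B hB hfB hτB using h
  exact ⟨⋃ n, B n, .iUnion hB, iUnion_mono hfB,
    le_antisymm (hτ.measure_iUnion_le hB fun n => (hτB n).le) zero_le⟩

lemma Negligible.union (hτ : SigmaMaxitive τ) (hN : Negligible τ N) (hN' : Negligible τ N') :
    Negligible τ (N ∪ N') :=
  union_mem_of_iUnion_mem (F := {N | Negligible τ N}) (fun _ => negligible_iUnion hτ) hN hN'

lemma Negligible.diff_trans (hτ : SigmaMaxitive τ) {S L A : Set E}
    (hSL : Negligible τ (S \ L)) (hLA : Negligible τ (L \ A)) : Negligible τ (S \ A) :=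
  (hSL.union hτ hLA).mono fun x ⟨hxS, hxA⟩ => by
    by_cases hxL : x ∈ L
    exacts [Or.inr ⟨hxL, hxA⟩, Or.inl ⟨hxS, hxL⟩]

end Negligible

section Saturation

variable [MeasurableSpace E] {τ : Set E → ℝ≥0∞} {F : Set (Set E)} {A B : Set E}

lemma saturation_mono (hAB : A ⊆ B) (hB : B ∈ saturation τ F) : A ∈ saturation τ F :=
  let ⟨S, hS, hBS⟩ := hB
  ⟨S, hS, hBS.mono (sdiff_subset_sdiff_left hAB)⟩

lemma mem_saturation_of_mem (hτ : Maxitive τ) (hA : A ∈ F) : A ∈ saturation τ F :=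
  ⟨A, hA, by simpa using negligible_of_measure_eq_zero MeasurableSet.empty hτ.1⟩

lemma mem_saturation_of_measure_eq_zero (hF : F.Nonempty) (hB : MeasurableSet B)
    (h : τ B = 0) : B ∈ saturation τ F :=
  let ⟨S, hS⟩ := hF
  ⟨S, hS, (negligible_of_measure_eq_zero hB h).mono sdiff_subset⟩

lemma iUnion_mem_saturation (hτ : SigmaMaxitive τ)
    (hF : ∀ f : ℕ → Set E, (∀ n, f n ∈ F) → ⋃ n, f n ∈ F) {f : ℕ → Set E}
    (hf : ∀ n, f n ∈ saturation τ F) : ⋃ n, f n ∈ saturation τ F := by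
  choose S hS hfS using hf
  refine ⟨⋃ n, S n, hF S hS, (negligible_iUnion hτ hfS).mono ?_⟩
  rintro x ⟨hx, hxS⟩
  obtain ⟨n, hxn⟩ := mem_iUnion.1 hx
  exact mem_iUnion.2 ⟨n, hxn, fun h => hxS (mem_iUnion.2 ⟨n, h⟩)⟩

/-- σ-principality applied to the σ-ideal of measurable sets in the saturation of `F`. -/
lemma SigmaPrincipal.exists_forall_negligible_diff (hτ : SigmaMaxitive τ)
    (hprin : SigmaPrincipal τ) (hF_meas : ∀ S ∈ F, MeasurableSet S) (hF_ne : F.Nonempty)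
    (hF : ∀ f : ℕ → Set E, (∀ n, f n ∈ F) → ⋃ n, f n ∈ F) :
    ∃ A ∈ F, ∀ S ∈ F, Negligible τ (S \ A) := by
  have hJ : SigmaIdeal {C | MeasurableSet C ∧ C ∈ saturation τ F} := by
    obtain ⟨S, hS⟩ := hF_ne
    refine ⟨⟨S, hF_meas S hS, mem_saturation_of_mem hτ.1 hS⟩, fun _ hC => hC.1,
      fun f hf => ⟨.iUnion fun n => (hf n).1, iUnion_mem_saturation hτ hF fun n => (hf n).2⟩,
      fun C S hC hS hCS => ⟨hC, saturation_mono hCS hS.2⟩⟩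
  obtain ⟨L, ⟨-, A, hA, hLA⟩, hL⟩ := hprin _ hJ
  exact ⟨A, hA, fun S hS => (hL S ⟨hF_meas S hS, mem_saturation_of_mem hτ.1 hS⟩).diff_trans hτ hLA⟩

end Saturation

section Shilkret

variable [MeasurableSpace E] {τ : Set E → ℝ≥0∞} {c : E → ℝ≥0∞} {A B : Set E}

lemma mul_le_shilkret {t : ℝ≥0∞} (ht : t < ⊤) :
    t * τ (B ∩ {x | t < c x}) ≤ shilkret τ c B :=
  le_iSup₂ (f := fun t (_ : t ∈ Iio ⊤) => t * τ (B ∩ {x | t < c x})) t ht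

/-- Unlike `mul_le_shilkret`, this allows `t = ⊤`. -/
lemma mul_le_shilkret_of_subset (hτ : Maxitive τ) (hc : Premeasurable c)
    (hA : MeasurableSet A) (hB : MeasurableSet B) (hAB : A ⊆ B) {t : ℝ≥0∞}
    (ht : ∀ x ∈ A, t ≤ c x) : t * τ A ≤ shilkret τ c B :=
  ENNReal.mul_le_of_forall_lt fun s hs r hr =>
    calc s * r ≤ s * τ (B ∩ {x | s < c x}) :=
          by gcongr; exact hr.le.trans (hτ.mono hA (hB.inter (hc s))
            fun x hx => ⟨hAB hx, hs.trans_le (ht x hx)⟩)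
      _ ≤ shilkret τ c B := mul_le_shilkret (hs.trans_le le_top)

lemma shilkret_le_of_forall_mul_le {ν : Set E → ℝ≥0∞} (hν : Maxitive ν) (hc : Premeasurable c)
    (hB : MeasurableSet B)
    (h : ∀ t A, MeasurableSet A → (∀ x ∈ A, t < c x) → t * τ A ≤ ν A) :
    shilkret τ c B ≤ ν B :=
  iSup₂_le fun t _ => (h t _ (hB.inter (hc t)) fun _ hx => hx.2).trans
    (hν.mono (hB.inter (hc t)) hB inter_subset_left)

lemma shilkret_compl_setOf_pos (hτ : Maxitive τ) : shilkret τ c {x | 0 < c x}ᶜ = 0 := by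
  refine le_antisymm (iSup₂_le fun t _ => ?_) zero_le
  have hempty : {x | 0 < c x}ᶜ ∩ {x | t < c x} = ∅ :=
    eq_empty_of_forall_notMem fun x ⟨hx0, hxt⟩ => hx0 ((zero_le (a := t)).trans_lt hxt)
  rw [hempty, hτ.1, mul_zero]

lemma measure_inter_setOf_pos_eq_zero (hτ : SigmaMaxitive τ) (hc : Premeasurable c)
    (hB : MeasurableSet B) (h : shilkret τ c B = 0) : τ (B ∩ {x | 0 < c x}) = 0 := by
  rw [setOf_pos_eq_iUnion_inv_lt, inter_iUnion]
  refine le_antisymm (hτ.measure_iUnion_le (fun n => hB.inter (hc _)) fun n => ?_) zero_le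
  have hlt : ((n : ℝ≥0∞) + 1)⁻¹ < ⊤ := ENNReal.inv_lt_top.2 (by positivity)
  have hterm := (mul_le_shilkret (τ := τ) (c := c) (B := B) hlt).trans h.le
  rw [nonpos_iff_eq_zero, mul_eq_zero] at hterm
  exact (hterm.resolve_left (ENNReal.inv_ne_zero.2 (by simp))).le

end Shilkret

section Necessity

variable [MeasurableSpace E] {τ : Set E → ℝ≥0∞} {𝓝 : Set (Set E)}

lemma sigmaMaxitive_indicator_compl (hempty : ∅ ∈ 𝓝) (hmono : ∀ A B, A ⊆ B → B ∈ 𝓝 → A ∈ 𝓝)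
    (hunion : ∀ f : ℕ → Set E, (∀ n, f n ∈ 𝓝) → ⋃ n, f n ∈ 𝓝) :
    SigmaMaxitive (𝓝ᶜ.indicator 1) := by
  have hiUnion : ∀ f : ℕ → Set E, ⋃ n, f n ∈ 𝓝 ↔ ∀ n, f n ∈ 𝓝 := fun f =>
    ⟨fun h n => hmono _ _ (subset_iUnion f n) h, hunion f⟩
  refine ⟨⟨by simp [hempty], fun A B _ _ => ?_⟩, fun f _ _ => ?_⟩
  · have hAB : A ∪ B ∈ 𝓝 ↔ A ∈ 𝓝 ∧ B ∈ 𝓝 :=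
      ⟨fun h => ⟨hmono _ _ subset_union_left h, hmono _ _ subset_union_right h⟩,
        fun h => union_mem_of_iUnion_mem hunion h.1 h.2⟩
    by_cases hA : A ∈ 𝓝 <;> by_cases hB : B ∈ 𝓝 <;> simp [hAB, hA, hB]
  · by_cases hf : ∀ n, f n ∈ 𝓝
    · simp [hiUnion, hf]
    · obtain ⟨m, hm⟩ := not_forall.1 hf
      have hle_one : ∀ S, 𝓝ᶜ.indicator (1 : Set E → ℝ≥0∞) S ≤ 1 :=
        indicator_le_self' fun _ _ => zero_le
      have hU : ⋃ n, f n ∈ 𝓝ᶜ := fun h => hf ((hiUnion f).1 h)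
      exact le_antisymm ((hle_one _).trans (le_iSup_of_le m (indicator_of_mem hm 1).ge))
        (iSup_le fun n => (hle_one _).trans (indicator_of_mem hU 1).ge)

lemma HasShilkretRNProperty.exists_indicator_compl_eq_shilkret (hRN : HasShilkretRNProperty τ)
    (hτ : Maxitive τ) (hmono : ∀ A B, A ⊆ B → B ∈ 𝓝 → A ∈ 𝓝)
    (hunion : ∀ f : ℕ → Set E, (∀ n, f n ∈ 𝓝) → ⋃ n, f n ∈ 𝓝)
    (hnull : ∀ B, MeasurableSet B → τ B = 0 → B ∈ 𝓝) :
    ∃ c, Premeasurable c ∧ {x | 0 < c x}ᶜ ∈ 𝓝 ∧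
      ∀ B, MeasurableSet B → 𝓝ᶜ.indicator 1 B = shilkret τ c B := by
  obtain ⟨c, hc, hνc⟩ :=
    hRN _ (sigmaMaxitive_indicator_compl (hnull ∅ .empty hτ.1) hmono hunion) fun B hB => by
      by_cases h0 : τ B = 0
      · simp [hnull B hB h0]
      · simp [ENNReal.top_mul h0]
  refine ⟨c, hc, ?_, hνc⟩
  by_contra hZ
  simpa [hZ, shilkret_compl_setOf_pos hτ] using hνc _ (hc 0).compl

lemma HasShilkretRNProperty.isSigmaFinite (hτ : SigmaMaxitive τ)
    (hRN : HasShilkretRNProperty τ) : IsSigmaFinite τ := by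
  obtain ⟨c, hc, hZ, hνc⟩ := hRN.exists_indicator_compl_eq_shilkret hτ.1
    (𝓝 := {N | Negligible τ N}) (fun _ _ h hB => hB.mono h) (fun _ => negligible_iUnion hτ)
    fun _ => negligible_of_measure_eq_zero
  replace hZ : τ {x | 0 < c x}ᶜ = 0 := hZ.measure_eq_zero hτ.1 (hc 0).compl
  have hlevel : ∀ n : ℕ, τ {x | ((n : ℝ≥0∞) + 1)⁻¹ < c x} < ⊤ := by
    intro n
    set t : ℝ≥0∞ := ((n : ℝ≥0∞) + 1)⁻¹
    have hmul : t * τ {x | t < c x} ≤ 1 := by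
      calc t * τ {x | t < c x} = t * τ ({x | t < c x} ∩ {x | t < c x}) := by rw [inter_self]
        _ ≤ shilkret τ c {x | t < c x} := mul_le_shilkret (ENNReal.inv_lt_top.2 (by positivity))
        _ = _ := (hνc _ (hc t)).symm
        _ ≤ 1 := indicator_le_self' (fun _ _ => zero_le) _
    have hle : τ {x | t < c x} ≤ t⁻¹ := ENNReal.le_inv_iff_mul_le.2 (by rwa [mul_comm])
    exact hle.trans_lt (by simp [t])
  refine ⟨fun n => {x | 0 < c x}ᶜ ∪ {x | ((n : ℝ≥0∞) + 1)⁻¹ < c x},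
    fun n => (hc 0).compl.union (hc _), ?_, fun n => ?_⟩
  · rw [← union_iUnion, ← setOf_pos_eq_iUnion_inv_lt, compl_union_self]
  · rw [hτ.1.2 _ _ (hc 0).compl (hc _), hZ, max_eq_right zero_le]
    exact hlevel n

lemma HasShilkretRNProperty.sigmaPrincipal (hτ : SigmaMaxitive τ)
    (hRN : HasShilkretRNProperty τ) : SigmaPrincipal τ := by
  intro I hI
  obtain ⟨c, hc, ⟨L, hL, hZL⟩, hνc⟩ := hRN.exists_indicator_compl_eq_shilkret hτ.1
    (𝓝 := saturation τ I) (fun _ _ => saturation_mono) (fun _ => iUnion_mem_saturation hτ hI.2.2.1)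
    fun _ => mem_saturation_of_measure_eq_zero hI.1
  refine ⟨L, hL, fun S hS => ?_⟩
  have hSpos : τ (S ∩ {x | 0 < c x}) = 0 := by
    refine measure_inter_setOf_pos_eq_zero hτ hc (hI.2.1 S hS) ?_
    rw [← hνc S (hI.2.1 S hS)]
    simp [mem_saturation_of_mem hτ.1 hS]
  refine ((negligible_of_measure_eq_zero ((hI.2.1 S hS).inter (hc 0)) hSpos).union hτ hZL).mono ?_
  rintro x ⟨hxS, hxL⟩
  by_cases hx : 0 < c x
  exacts [Or.inl ⟨hxS, hx⟩, Or.inr ⟨hx, hxL⟩]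

end Necessity

section LevelDensity

variable {q : ℕ → ℝ≥0∞} {L : ℕ → Set E} {x : E} {a : ℝ≥0∞}

lemma measurable_levelDensity [MeasurableSpace E] (hL : ∀ n, MeasurableSet (L n)) :
    Measurable (levelDensity q L) :=
  .iInf fun n => Measurable.ite (hL n) measurable_const measurable_const

lemma levelDensity_le {n : ℕ} (hx : x ∈ L n) : levelDensity q L x ≤ q n :=
  (iInf_le _ n).trans_eq (if_pos hx)

lemma exists_mem_of_levelDensity_lt (h : levelDensity q L x < a) : ∃ n, x ∈ L n ∧ q n < a := by
  obtain ⟨n, hn⟩ := iInf_lt_iff.1 h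
  by_cases hx : x ∈ L n
  · exact ⟨n, hx, by rwa [if_pos hx] at hn⟩
  · rw [if_neg hx] at hn
    exact absurd hn not_top_lt

end LevelDensity

section Sufficiency

variable [MeasurableSpace E] {ν τ : Set E → ℝ≥0∞}

lemma sigmaIdeal_dominatedSets (hν : SigmaMaxitive ν) (hτ : Maxitive τ) (q : ℝ≥0∞) :
    SigmaIdeal (dominatedSets ν τ q) := by
  refine ⟨⟨∅, .empty, fun A' hA' _ => ?_⟩, fun _ hS => hS.1, fun f hf => ?_,
    fun B S hB hS hBS => ⟨hB, fun A' hA' => hS.2 A' (hA'.trans hBS)⟩⟩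
  · rw [subset_empty_iff.1 hA', hν.1.1]
    exact zero_le
  · refine ⟨.iUnion fun n => (hf n).1, fun A' hA' hA'm => ?_⟩
    have hA'eq : A' = ⋃ n, A' ∩ f n := by rw [← inter_iUnion, inter_eq_left.2 hA']
    conv_lhs => rw [hA'eq]
    refine hν.measure_iUnion_le (fun n => hA'm.inter (hf n).1) fun n => ?_
    calc ν (A' ∩ f n) ≤ q * τ (A' ∩ f n) :=
          (hf n).2 _ inter_subset_right (hA'm.inter (hf n).1)
      _ ≤ q * τ A' := by gcongr; exact hτ.mono (hA'm.inter (hf n).1) hA'm inter_subset_left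

lemma mul_measure_le_of_disjoint (hτ : SigmaMaxitive τ) (hprin : SigmaPrincipal τ)
    (hν : SigmaMaxitive ν) (hac : AbsCont ν τ) {q : ℝ≥0∞} {L A : Set E}
    (hL : ∀ S ∈ dominatedSets ν τ q, Negligible τ (S \ L)) (hA : MeasurableSet A)
    (hAL : Disjoint A L) : q * τ A ≤ ν A := by
  obtain ⟨A₀, ⟨hA₀m, hA₀A, hA₀⟩, hmax⟩ :=
    hprin.exists_forall_negligible_diff hτ
      (F := {A' | MeasurableSet A' ∧ A' ⊆ A ∧ q * τ A' ≤ ν A'}) (fun _ h => h.1)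
      ⟨∅, .empty, empty_subset _, by rw [hτ.1.1, mul_zero]; exact zero_le⟩
      fun f hf => ⟨.iUnion fun n => (hf n).1, iUnion_subset fun n => (hf n).2.1,
        (hτ.const_mul q).measure_iUnion_le (fun n => (hf n).1) fun n => (hf n).2.2.trans
          (hν.1.mono (hf n).1 (.iUnion fun n => (hf n).1) (subset_iUnion f n))⟩
  -- Otherwise `A \ A₀`, which misses `L`, is not dominated and so contains a set of the exhausted
  -- family outside `A₀`, hence null.
  have hrest : τ (A \ A₀) = 0 := by
    by_contra hpos
    have hnotdom : A \ A₀ ∉ dominatedSets ν τ q := fun hdom =>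
      hpos (((hL _ hdom).mono fun x hx => ⟨hx, hAL.notMem_of_mem_left hx.1⟩).measure_eq_zero
        hτ.1 (hA.diff hA₀m))
    obtain ⟨A'', hA''sub, hA''m, hlt⟩ :
        ∃ A'' ⊆ A \ A₀, MeasurableSet A'' ∧ q * τ A'' < ν A'' := by
      simpa [dominatedSets, hA.diff hA₀m] using hnotdom
    have hnull : τ A'' = 0 :=
      ((hmax A'' ⟨hA''m, hA''sub.trans sdiff_subset, hlt.le⟩).mono
        fun x hx => ⟨hx, (hA''sub hx).2⟩).measure_eq_zero hτ.1 hA''m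
    simp [hnull, hac A'' hA''m hnull] at hlt
  calc q * τ A ≤ q * τ A₀ := by gcongr; exact hτ.1.le_of_measure_diff_eq_zero hA hA₀m hrest
    _ ≤ ν A₀ := hA₀
    _ ≤ ν A := hν.1.mono hA₀m hA hA₀A

variable {q : ℕ → ℝ≥0∞} {L : ℕ → Set E} {a : ℝ≥0∞}

lemma le_mul_of_forall_levelDensity_lt (hν : SigmaMaxitive ν) (hτ : Maxitive τ)
    (hL : ∀ n, L n ∈ dominatedSets ν τ (q n)) {A : Set E} (hA : MeasurableSet A)
    (hAc : ∀ x ∈ A, levelDensity q L x < a) : ν A ≤ a * τ A := by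
  have hcover : A = ⋃ n : {n // q n < a}, A ∩ L n := by
    refine subset_antisymm (fun x hx => ?_) (iUnion_subset fun _ => inter_subset_left)
    obtain ⟨n, hxn, hqn⟩ := exists_mem_of_levelDensity_lt (hAc x hx)
    exact mem_iUnion.2 ⟨⟨n, hqn⟩, hx, hxn⟩
  conv_lhs => rw [hcover]
  refine hν.measure_iUnion_le (fun n : {n // q n < a} => hA.inter (hL n).1) fun n => ?_
  calc ν (A ∩ L n) ≤ q n * τ (A ∩ L n) := (hL n).2 _ inter_subset_right (hA.inter (hL n).1)
    _ ≤ a * τ A := by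
        gcongr
        exacts [n.2.le, hτ.mono (hA.inter (hL n).1) hA inter_subset_left]

lemma mul_le_of_forall_lt_levelDensity (hτ : SigmaMaxitive τ) (hprin : SigmaPrincipal τ)
    (hν : SigmaMaxitive ν) (hac : AbsCont ν τ) (hq : DenseRange q)
    (hL : ∀ n, ∀ S ∈ dominatedSets ν τ (q n), Negligible τ (S \ L n)) {t : ℝ≥0∞} {A : Set E}
    (hA : MeasurableSet A) (hAc : ∀ x ∈ A, t < levelDensity q L x) : t * τ A ≤ ν A :=
  ENNReal.mul_le_of_forall_lt fun s hs r hr => by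
    obtain ⟨_, ⟨n, rfl⟩, hsn, hnt⟩ := Dense.exists_between hq hs
    have hdisj : Disjoint A (L n) := disjoint_left.2 fun x hxA hxL =>
      (hnt.trans (hAc x hxA)).not_ge (levelDensity_le hxL)
    calc s * r ≤ q n * τ A := by gcongr
      _ ≤ ν A := mul_measure_le_of_disjoint hτ hprin hν hac (hL n) hA hdisj

variable {c : E → ℝ≥0∞}

lemma measure_setOf_eq_zero_of_forall_le_mul (hν : SigmaMaxitive ν) (hτ : Maxitive τ)
    (hfin : IsSigmaFinite τ) (hc : Measurable c)
    (hdom : ∀ a A, MeasurableSet A → (∀ x ∈ A, c x < a) → ν A ≤ a * τ A) :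
    ν {x | c x = 0} = 0 := by
  obtain ⟨P, hPm, hPcover, hPfin⟩ := hfin
  have hZ : MeasurableSet {x | c x = 0} := hc (measurableSet_singleton 0)
  rw [← inter_univ {x | c x = 0}, ← hPcover, inter_iUnion]
  refine le_antisymm (hν.measure_iUnion_le (fun n => hZ.inter (hPm n)) fun n => ?_) zero_le
  have hsmall : ∀ m : ℕ, ν ({x | c x = 0} ∩ P n) ≤ (m : ℝ≥0∞)⁻¹ * τ (P n) := fun m =>
    (hdom _ _ (hZ.inter (hPm n)) fun x hx => by
      rw [show c x = 0 from hx.1]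
      exact ENNReal.inv_pos.2 (ENNReal.natCast_ne_top m)).trans
      (by gcongr; exact hτ.mono (hZ.inter (hPm n)) (hPm n) inter_subset_right)
  have hlim : Tendsto (fun m : ℕ => (m : ℝ≥0∞)⁻¹ * τ (P n)) atTop (nhds 0) := by
    simpa using ENNReal.Tendsto.mul_const ENNReal.tendsto_inv_nat_nhds_zero (Or.inr (hPfin n).ne)
  exact ge_of_tendsto' hlim hsmall

lemma le_shilkret_of_forall_le_mul (hν : SigmaMaxitive ν) (hτ : Maxitive τ) (hc : Measurable c)
    (hac : ∀ B, MeasurableSet B → ν B ≤ ⊤ * τ B) (hzero : ν {x | c x = 0} = 0)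
    (hdom : ∀ a A, MeasurableSet A → (∀ x ∈ A, c x < a) → ν A ≤ a * τ A) {B : Set E}
    (hB : MeasurableSet B) : ν B ≤ shilkret τ c B := by
  set R := shilkret τ c B
  have hslice : ∀ δ, 1 < δ → δ ≠ ⊤ → ν B ≤ δ * R := by
    intro δ hδ hδtop
    have hδ0 : δ ≠ 0 := (zero_lt_one.trans hδ).ne'
    set P : ℤ → Set E := fun k => B ∩ {x | δ ^ k ≤ c x} ∩ {x | c x < δ ^ (k + 1)}
    have hPm : ∀ k, MeasurableSet (P k) := fun k =>
      (hB.inter (measurableSet_le measurable_const hc)).inter (measurableSet_lt hc measurable_const)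
    have hZm : MeasurableSet {x | c x = 0} := hc (measurableSet_singleton 0)
    have hTm : MeasurableSet (B ∩ {x | c x = ⊤}) := hB.inter (hc (measurableSet_singleton ⊤))
    have hcover : B ⊆ ({x | c x = 0} ∪ B ∩ {x | c x = ⊤}) ∪ ⋃ k, P k := by
      intro x hx
      rcases eq_or_ne (c x) 0 with h0 | h0
      · exact Or.inl (Or.inl h0)
      rcases eq_or_ne (c x) ⊤ with htop | htop
      · exact Or.inl (Or.inr ⟨hx, htop⟩)
      obtain ⟨k, hk⟩ := ENNReal.exists_mem_Ico_zpow h0 htop hδ hδtop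
      exact Or.inr (mem_iUnion.2 ⟨k, ⟨hx, hk.1⟩, hk.2⟩)
    refine (hν.1.mono hB ((hZm.union hTm).union (.iUnion hPm)) hcover).trans ?_
    rw [hν.1.2 _ _ (hZm.union hTm) (.iUnion hPm), hν.1.2 _ _ hZm hTm, hzero]
    refine max_le (max_le zero_le ?_) (hν.measure_iUnion_le hPm fun k => ?_)
    · calc ν (B ∩ {x | c x = ⊤}) ≤ ⊤ * τ (B ∩ {x | c x = ⊤}) := hac _ hTm
        _ ≤ R := mul_le_shilkret_of_subset hτ hc.premeasurable hTm hB inter_subset_left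
            fun x hx => hx.2.ge
        _ ≤ δ * R := le_mul_of_one_le_left zero_le hδ.le
    · calc ν (P k) ≤ δ ^ (k + 1) * τ (P k) := hdom _ _ (hPm k) fun x hx => hx.2
        _ = δ * (δ ^ k * τ (P k)) := by
            rw [ENNReal.zpow_add hδ0 hδtop, zpow_one, mul_comm (δ ^ k) δ, mul_assoc]
        _ ≤ δ * R := by
            gcongr
            exact mul_le_shilkret_of_subset hτ hc.premeasurable (hPm k) hB
              (fun x hx => hx.1.1) fun x hx => hx.1.2
  refine ENNReal.le_of_forall_lt_one_mul_le fun a ha => ?_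
  rcases eq_or_ne a 0 with rfl | ha0
  · simp
  calc a * ν B ≤ a * (a⁻¹ * R) := by
        gcongr
        exact hslice _ (ENNReal.one_lt_inv.2 ha) (ENNReal.inv_ne_top.2 ha0)
    _ = R := by rw [← mul_assoc, ENNReal.mul_inv_cancel ha0 (ha.trans ENNReal.one_lt_top).ne,
        one_mul]

theorem hasShilkretRNProperty_of_isSigmaFinite_of_sigmaPrincipal (hτ : SigmaMaxitive τ)
    (hfin : IsSigmaFinite τ) (hprin : SigmaPrincipal τ) : HasShilkretRNProperty τ := by
  intro ν hν hac
  have hac' : AbsCont ν τ := fun B hB h0 => by simpa [h0] using hac B hB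
  set q := TopologicalSpace.denseSeq ℝ≥0∞
  choose L hL hLmax using fun n => hprin _ (sigmaIdeal_dominatedSets hν hτ.1 (q n))
  have hc : Measurable (levelDensity q L) := measurable_levelDensity fun n => (hL n).1
  have hdom := fun a A (hA : MeasurableSet A) =>
    le_mul_of_forall_levelDensity_lt (a := a) hν hτ.1 hL hA
  refine ⟨levelDensity q L, hc.premeasurable, fun B hB => le_antisymm ?_ ?_⟩
  · exact le_shilkret_of_forall_le_mul hν hτ.1 hc hac
      (measure_setOf_eq_zero_of_forall_le_mul hν hτ.1 hfin hc hdom) hdom hB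
  · exact shilkret_le_of_forall_mul_le hν.1 hc.premeasurable hB fun t A hA =>
      mul_le_of_forall_lt_levelDensity hτ hprin hν hac' (TopologicalSpace.denseRange_denseSeq _)
        hLmax hA

end Sufficiency

/-- A σ-maxitive measure `τ` has the Radon–Nikodym property with respect to the Shilkret
integral iff it is σ-finite and σ-principal. -/
theorem shilkret_rnProperty_iff [MeasurableSpace E] (τ : Set E → ℝ≥0∞)
    (hτ : SigmaMaxitive τ) :
    (∀ ν : Set E → ℝ≥0∞, SigmaMaxitive ν →
        (∀ B : Set E, MeasurableSet B → ν B ≤ ⊤ * τ B) →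
        ∃ c : E → ℝ≥0∞, Premeasurable c ∧ ∀ B : Set E, MeasurableSet B →
          ν B = ⨆ t ∈ Set.Iio (⊤ : ℝ≥0∞), t * τ (B ∩ {x | t < c x})) ↔
    ((∃ B : ℕ → Set E, (∀ n, MeasurableSet (B n)) ∧ (⋃ n, B n) = Set.univ ∧
        ∀ n, τ (B n) < ⊤) ∧ SigmaPrincipal τ) :=
  ⟨fun hRN => ⟨HasShilkretRNProperty.isSigmaFinite hτ hRN,
      HasShilkretRNProperty.sigmaPrincipal hτ hRN⟩,
    fun ⟨hfin, hprin⟩ => hasShilkretRNProperty_of_isSigmaFinite_of_sigmaPrincipal hτ hfin hprin⟩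
end

section
/- (Murofushi–Sugeno–Agbeko) A set function ν on a σ-algebra 𝓑 is an optimal measure if and only if it is a maxitive measure that is continuous from above. In this case, for every sequence (Bₙ)_{n∈ℕ} of elements of 𝓑, ν(⋃ₙ Bₙ) = maxₙ ν(Bₙ), where the supremum supₙ ν(Bₙ) is attained at some index. -/
open scoped ENNReal
open Set Filter MeasureTheory

variable {E : Type*}

/-!
For a nondecreasing sequence `Aₙ` with union `U`, maxitivity splits
`ν U = max (ν Aₙ) (ν (U \ Aₙ))`, and continuity from above along `U \ Aₙ ↓ ∅` drives the
second term to `0`. So once `ν (U \ Aₙ) < ν U`, the maximum is `ν Aₙ`: the supremum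
`ν U = supₙ ν Aₙ` is attained at a finite stage, which gives continuity from below.
Applied to the partial unions of an arbitrary sequence, finite maxitivity then places the
maximum at a single `Bₘ`.
-/

open scoped Topology

theorem MeasurableSet.accumulate [MeasurableSpace E] {B : ℕ → Set E}
    (hB : ∀ n, MeasurableSet (B n)) (n : ℕ) : MeasurableSet (accumulate B n) := by
  rw [accumulate_def]
  exact .biUnion (to_countable _) fun m _ => hB m

namespace Maxitive

variable [MeasurableSpace E] {ν : Set E → ℝ≥0∞}

theorem mono_s15 (h : Maxitive ν) {A B : Set E} (hA : MeasurableSet A) (hB : MeasurableSet B)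
    (hAB : A ⊆ B) : ν A ≤ ν B := by
  rw [← union_eq_self_of_subset_left hAB, h.2 A B hA hB]
  exact le_max_left _ _

theorem eq_max_sdiff (h : Maxitive ν) {A B : Set E} (hA : MeasurableSet A)
    (hB : MeasurableSet B) (hAB : A ⊆ B) : ν B = max (ν A) (ν (B \ A)) := by
  rw [← h.2 A _ hA (hB.diff hA), union_sdiff_cancel hAB]

theorem exists_accumulate_eq (h : Maxitive ν) {B : ℕ → Set E}
    (hB : ∀ n, MeasurableSet (B n)) (n : ℕ) : ∃ m, ν (accumulate B n) = ν (B m) := by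
  induction n with
  | zero => exact ⟨0, by rw [accumulate_zero_nat]⟩
  | succ n ih =>
    obtain ⟨m, hm⟩ := ih
    rw [accumulate_succ, h.2 _ _ (.accumulate hB n) (hB (n + 1)), hm]
    rcases le_total (ν (B m)) (ν (B (n + 1))) with hle | hle
    · exact ⟨n + 1, max_eq_right hle⟩
    · exact ⟨m, max_eq_left hle⟩

theorem tendsto_iUnion_sdiff_zero (h : Maxitive ν) (hc : ContFromAbove ν) {A : ℕ → Set E}
    (hA : ∀ n, MeasurableSet (A n)) (hmono : Monotone A) :
    Tendsto (fun n => ν ((⋃ k, A k) \ A n)) atTop (𝓝 0) := by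
  have hempty : ⋂ n, (⋃ k, A k) \ A n = ∅ := by rw [← sdiff_iUnion, sdiff_self]
  simpa only [hempty, h.1] using hc _ (fun n => (MeasurableSet.iUnion hA).diff (hA n))
    fun m n hmn => sdiff_subset_sdiff_right (hmono hmn)

theorem exists_iUnion_eq_of_monotone (h : Maxitive ν) (hc : ContFromAbove ν) {A : ℕ → Set E}
    (hA : ∀ n, MeasurableSet (A n)) (hmono : Monotone A) : ∃ n, ν (⋃ k, A k) = ν (A n) := by
  have hU : MeasurableSet (⋃ k, A k) := .iUnion hA
  rcases eq_zero_or_pos (ν (⋃ k, A k)) with hzero | hpos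
  · exact ⟨0, le_antisymm (hzero ▸ zero_le) (h.mono_s15 (hA 0) hU (subset_iUnion A 0))⟩
  obtain ⟨n, hn⟩ := ((h.tendsto_iUnion_sdiff_zero hc hA hmono).eventually_lt_const hpos).exists
  have hsplit := h.eq_max_sdiff (hA n) hU (subset_iUnion A n)
  exact ⟨n, le_antisymm (not_lt.1 fun hlt => (max_lt hlt hn).ne hsplit.symm)
    (h.mono_s15 (hA n) hU (subset_iUnion A n))⟩

theorem contFromBelow (h : Maxitive ν) (hc : ContFromAbove ν) : ContFromBelow ν := by
  intro A hA hmono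
  obtain ⟨n, hn⟩ := h.exists_iUnion_eq_of_monotone hc hA hmono
  refine tendsto_atTop_of_eventually_const (i₀ := n) fun m hm => le_antisymm ?_ ?_
  · exact h.mono_s15 (hA m) (.iUnion hA) (subset_iUnion A m)
  · exact hn ▸ h.mono_s15 (hA n) (hA m) (hmono hm)

theorem exists_iUnion_eq_max (h : Maxitive ν) (hc : ContFromAbove ν) {B : ℕ → Set E}
    (hB : ∀ n, MeasurableSet (B n)) :
    ∃ n, ν (⋃ m, B m) = ν (B n) ∧ ∀ m, ν (B m) ≤ ν (B n) := by
  obtain ⟨k, hk⟩ := h.exists_iUnion_eq_of_monotone hc (.accumulate hB) monotone_accumulate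
  obtain ⟨n, hn⟩ := h.exists_accumulate_eq hB k
  rw [iUnion_accumulate, hn] at hk
  exact ⟨n, hk, fun m => hk ▸ h.mono_s15 (hB m) (.iUnion hB) (subset_iUnion B m)⟩

end Maxitive

theorem optimal_iff_maxitive_contFromAbove_general [MeasurableSpace E] (ν : Set E → ℝ≥0∞) :
    (Optimal ν ↔ Maxitive ν ∧ ContFromAbove ν) ∧
    (Optimal ν → ∀ B : ℕ → Set E, (∀ n, MeasurableSet (B n)) →
      ∃ n : ℕ, ν (⋃ m, B m) = ν (B n) ∧ ∀ m : ℕ, ν (B m) ≤ ν (B n)) :=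
  ⟨⟨fun h => ⟨h.1, h.2.2⟩, fun h => ⟨h.1, h.1.contFromBelow h.2, h.2⟩⟩,
    fun h _ hB => h.1.exists_iUnion_eq_max h.2.2 hB⟩

/-- (Murofushi–Sugeno–Agbeko) A set function is an optimal measure iff it is a maxitive
measure continuous from above; in this case, for every sequence `(Bₙ)` of measurable sets,
`ν (⋃ₙ Bₙ) = maxₙ ν (Bₙ)`, the supremum being attained. -/
theorem optimal_iff_maxitive_contFromAbove [MeasurableSpace E] (ν : Set E → ℝ≥0∞)
    (hν0 : ν ∅ = 0) :
    (Optimal ν ↔ Maxitive ν ∧ ContFromAbove ν) ∧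
    (Optimal ν → ∀ B : ℕ → Set E, (∀ n, MeasurableSet (B n)) →
      ∃ n : ℕ, ν (⋃ m, B m) = ν (B n) ∧ ∀ m : ℕ, ν (B m) ≤ ν (B n)) :=
  optimal_iff_maxitive_contFromAbove_general ν
end

section
/- Let m be a σ-additive measure on a σ-algebra 𝓑. Then: if m is finite it is σ-finite; if m is σ-finite it is σ-principal; if m is σ-principal it satisfies the countable chain condition; and if m satisfies the countable chain condition it is localizable (where the last implication may use the axiom of choice). -/
open scoped ENNReal
open Set Filter MeasureTheory

variable {E : Type*}

/-! A σ-finite measure admits only countably many disjoint non-null sets (CCC). Under CCC, a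
maximal disjoint family of non-null members of a σ-ideal is countable, so its union belongs to the
ideal, and by maximality it contains every member of the ideal up to a null set; a greatest element
modulo null sets is in particular a least upper bound, which gives localizability. Conversely, if
`𝓐` is a disjoint family of non-null sets, a greatest element modulo null sets of the σ-ideal of
sets covered by countably many members of `𝓐` is covered by a countable `𝓒 ⊆ 𝓐`, and any member of
`𝓐 \ 𝓒` would be a non-null set missed by it. -/

namespace SigmaIdeal

variable [MeasurableSpace E] {I : Set (Set E)}

theorem measurableSet (hI : SigmaIdeal I) {S : Set E} (hS : S ∈ I) : MeasurableSet S :=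
  hI.2.1 S hS

theorem mem_of_subset (hI : SigmaIdeal I) {B S : Set E} (hS : S ∈ I) (hB : MeasurableSet B)
    (hBS : B ⊆ S) : B ∈ I :=
  hI.2.2.2 B S hB hS hBS

theorem empty_mem (hI : SigmaIdeal I) : ∅ ∈ I :=
  let ⟨_, hS⟩ := hI.1
  hI.mem_of_subset hS .empty (empty_subset _)

theorem diff_mem (hI : SigmaIdeal I) {S T : Set E} (hS : S ∈ I) (hT : MeasurableSet T) :
    S \ T ∈ I :=
  hI.mem_of_subset hS ((hI.measurableSet hS).diff hT) sdiff_subset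

theorem sUnion_mem (hI : SigmaIdeal I) {𝓐 : Set (Set E)} (h𝓐 : 𝓐 ⊆ I) (hc : 𝓐.Countable) :
    ⋃₀ 𝓐 ∈ I := by
  rcases 𝓐.eq_empty_or_nonempty with rfl | hne
  · simpa using hI.empty_mem
  obtain ⟨f, rfl⟩ := hc.exists_eq_range hne
  rw [sUnion_range]
  exact hI.2.2.1 f fun n => h𝓐 (mem_range_self n)

end SigmaIdeal

def countablyCoveredIdeal [MeasurableSpace E] (𝓐 : Set (Set E)) : Set (Set E) :=
  {B | MeasurableSet B ∧ ∃ 𝓒 ⊆ 𝓐, 𝓒.Countable ∧ B ⊆ ⋃₀ 𝓒}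

theorem sigmaIdeal_countablyCoveredIdeal [MeasurableSpace E] (𝓐 : Set (Set E)) :
    SigmaIdeal (countablyCoveredIdeal 𝓐) := by
  refine ⟨⟨∅, .empty, ∅, empty_subset _, countable_empty, empty_subset _⟩, fun S hS => hS.1,
    fun f hf => ?_, fun B S hB ⟨_, 𝓒, h𝓒𝓐, h𝓒, hS𝓒⟩ hBS => ⟨hB, 𝓒, h𝓒𝓐, h𝓒, hBS.trans hS𝓒⟩⟩
  choose 𝓒 h𝓒𝓐 h𝓒 hf𝓒 using fun n => (hf n).2
  refine ⟨.iUnion fun n => (hf n).1, ⋃ n, 𝓒 n, iUnion_subset h𝓒𝓐, countable_iUnion h𝓒,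
    iUnion_subset fun n => (hf𝓒 n).trans (sUnion_mono (subset_iUnion 𝓒 n))⟩

theorem exists_maximal_pairwise_disjoint_subset {α : Type*} (𝓕 : Set (Set α)) :
    ∃ 𝓐, Maximal (fun 𝓐 : Set (Set α) => 𝓐 ⊆ 𝓕 ∧ 𝓐.Pairwise Disjoint) 𝓐 :=
  zorn_subset _ fun c hc hchain =>
    ⟨⋃₀ c, ⟨sUnion_subset fun _ h𝓐 => (hc h𝓐).1,
      hchain.pairwise_sUnion.2 fun _ h𝓐 => (hc h𝓐).2⟩, fun _ => subset_sUnion_of_mem⟩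

namespace MeasureTheory.Measure

variable [MeasurableSpace E]

def CountableChainCondition (m : Measure E) : Prop :=
  ∀ 𝓐 : Set (Set E), (∀ A ∈ 𝓐, MeasurableSet A ∧ 0 < m A) → 𝓐.Pairwise Disjoint → 𝓐.Countable

def IsSigmaPrincipal (m : Measure E) : Prop :=
  ∀ I : Set (Set E), SigmaIdeal I → ∃ L ∈ I, ∀ S ∈ I, m (S \ L) = 0

def IsLocalizable (m : Measure E) : Prop :=
  ∀ I : Set (Set E), SigmaIdeal I → ∃ L : Set E, MeasurableSet L ∧
    (∀ S ∈ I, m (S \ L) = 0) ∧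
    ∀ B : Set E, MeasurableSet B → (∀ S ∈ I, m (S \ B) = 0) → m (L \ B) = 0

variable {m : Measure E}

theorem countableChainCondition_of_sFinite [SFinite m] : m.CountableChainCondition := by
  intro 𝓐 h𝓐 hdisj
  have hpos : {A : 𝓐 | 0 < m A} = univ := eq_univ_of_forall fun A => (h𝓐 A A.2).2
  have := countable_meas_pos_of_disjoint_iUnion (μ := m) (As := ((↑) : 𝓐 → Set E))
    (fun A => (h𝓐 A A.2).1) fun A B hAB => hdisj A.2 B.2 (Subtype.coe_injective.ne hAB)
  rw [hpos, countable_univ_iff] at this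
  exact countable_coe_iff.1 this

theorem CountableChainCondition.isSigmaPrincipal (hm : m.CountableChainCondition) :
    m.IsSigmaPrincipal := by
  intro I hI
  obtain ⟨𝓐, ⟨h𝓐I, hdisj⟩, hmax⟩ :=
    exists_maximal_pairwise_disjoint_subset {A ∈ I | 0 < m A}
  have hL : ⋃₀ 𝓐 ∈ I := hI.sUnion_mem (fun A hA => (h𝓐I hA).1)
    (hm 𝓐 (fun A hA => ⟨hI.measurableSet (h𝓐I hA).1, (h𝓐I hA).2⟩) hdisj)
  refine ⟨⋃₀ 𝓐, hL, fun S hS => ?_⟩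
  by_contra hpos
  set A := S \ ⋃₀ 𝓐
  have hA𝓐 : A ∉ 𝓐 := fun hA => by
    have hA0 : A = ∅ := disjoint_sdiff_left.eq_bot_of_le (subset_sUnion_of_mem hA)
    exact hpos (by rw [hA0, measure_empty])
  refine hA𝓐 (hmax ⟨insert_subset ⟨hI.diff_mem hS (hI.measurableSet hL), pos_iff_ne_zero.2 hpos⟩
    h𝓐I, hdisj.insert fun B hB _ => ?_⟩ (subset_insert _ _) (mem_insert _ _))
  have hAB : Disjoint A B := disjoint_sdiff_left.mono_right (subset_sUnion_of_mem hB)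
  exact ⟨hAB, hAB.symm⟩

theorem IsSigmaPrincipal.countableChainCondition (hm : m.IsSigmaPrincipal) :
    m.CountableChainCondition := by
  intro 𝓐 h𝓐 hdisj
  obtain ⟨L, ⟨-, 𝓒, h𝓒𝓐, h𝓒, hL𝓒⟩, hnull⟩ :=
    hm _ (sigmaIdeal_countablyCoveredIdeal 𝓐)
  refine h𝓒.mono fun A hA => ?_
  by_contra hA𝓒
  have hAL : Disjoint A L := (disjoint_sUnion_right.2 fun C hC =>
    hdisj hA (h𝓒𝓐 hC) fun h => hA𝓒 (h ▸ hC)).mono_right hL𝓒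
  have hA0 : m (A \ L) = 0 :=
    hnull A ⟨(h𝓐 A hA).1, {A}, singleton_subset_iff.2 hA, countable_singleton A, by simp⟩
  rw [hAL.sdiff_eq_left] at hA0
  exact (h𝓐 A hA).2.ne' hA0

theorem IsSigmaPrincipal.isLocalizable (hm : m.IsSigmaPrincipal) : m.IsLocalizable := by
  intro I hI
  obtain ⟨L, hL, hnull⟩ := hm I hI
  exact ⟨L, hI.measurableSet hL, hnull, fun _ _ hB => hB L hL⟩

end MeasureTheory.Measure

/-- For a σ-additive measure `m`: finite implies σ-finite, σ-finite implies σ-principal,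
σ-principal implies the countable chain condition, and CCC implies localizable. -/
theorem measure_finite_sigmaFinite_sigmaPrincipal_ccc_localizable [MeasurableSpace E]
    (m : Measure E) :
    (m Set.univ < ⊤ →
      ∃ B : ℕ → Set E, (∀ n, MeasurableSet (B n)) ∧ (⋃ n, B n) = Set.univ ∧
        ∀ n, m (B n) < ⊤) ∧
    ((∃ B : ℕ → Set E, (∀ n, MeasurableSet (B n)) ∧ (⋃ n, B n) = Set.univ ∧
        ∀ n, m (B n) < ⊤) →
      ∀ I : Set (Set E), SigmaIdeal I → ∃ L ∈ I, ∀ S ∈ I, m (S \ L) = 0) ∧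
    ((∀ I : Set (Set E), SigmaIdeal I → ∃ L ∈ I, ∀ S ∈ I, m (S \ L) = 0) →
      ∀ 𝓐 : Set (Set E), (∀ A ∈ 𝓐, MeasurableSet A ∧ 0 < m A) →
        𝓐.Pairwise Disjoint → 𝓐.Countable) ∧
    ((∀ 𝓐 : Set (Set E), (∀ A ∈ 𝓐, MeasurableSet A ∧ 0 < m A) →
        𝓐.Pairwise Disjoint → 𝓐.Countable) →
      ∀ I : Set (Set E), SigmaIdeal I → ∃ L : Set E, MeasurableSet L ∧
        (∀ S ∈ I, m (S \ L) = 0) ∧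
        ∀ B : Set E, MeasurableSet B → (∀ S ∈ I, m (S \ B) = 0) → m (L \ B) = 0) := by
  refine ⟨fun hfin => ⟨fun _ => univ, fun _ => .univ, iUnion_const _, fun _ => hfin⟩,
    fun ⟨B, _, hcov, hfin⟩ => ?_, Measure.IsSigmaPrincipal.countableChainCondition,
    fun hccc => (Measure.CountableChainCondition.isSigmaPrincipal hccc).isLocalizable⟩
  have : SigmaFinite m := ⟨⟨⟨B, fun _ => trivial, hfin, hcov⟩⟩⟩
  exact Measure.countableChainCondition_of_sFinite.isSigmaPrincipal
end
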